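/- arXiv:2306.01946 — 4 statements merged into one kernel-verified Lean document; each statement's English description precedes it below -/
import Mathlib

section
/- Let A ∈ ℝ^{m×d}, b ∈ ℝ^m with A v̂ = b, let x ∈ ℝ^d be random with E(x xᵀ) = I_d and E(x xᵀ‖x‖²) = c I_d, and let v⁺ = v − τ⟨Av − b, Ax⟩x. Then E(‖v⁺ − v̂‖²) ≤ ‖v − v̂‖² − τ(2 − τ c‖A‖²)‖Av − b‖², where ‖A‖ is the operator norm. -/
open MeasureTheory Matrix

/-!
Write `e = v - v̂` and `r = Av - b = Ae`. The step is `v⁺ - v̂ = e - τ ⟨Aᵀr, x⟩ x`, so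
`‖v⁺ - v̂‖² = ‖e‖² - 2τ ⟨Aᵀr, x⟩⟨e, x⟩ + τ² ⟨Aᵀr, x⟩² ‖x‖²`. The two moment conditions turn the
expectations of the last two terms into `⟨Aᵀr, e⟩ = ‖r‖²` and `c ‖Aᵀr‖² ≤ c ‖A‖² ‖r‖²`; here
`c ≥ 0` because it is the expectation of `x₁² ‖x‖²`.
-/

/-- The spectral (operator) norm of a matrix, as the norm of the induced linear map
between Euclidean spaces. -/
noncomputable def matrixOpNorm {m d : ℕ} (A : Matrix (Fin m) (Fin d) ℝ) : ℝ :=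
  ‖LinearMap.toContinuousLinearMap (Matrix.toEuclideanLin A)‖

theorem dotProduct_self_eq_norm_toLp_sq {n : Type*} [Fintype n] (u : n → ℝ) :
    u ⬝ᵥ u = ‖WithLp.toLp 2 u‖ ^ 2 := by
  rw [← real_inner_self_eq_norm_sq, EuclideanSpace.inner_toLp_toLp, star_trivial]

open scoped Matrix.Norms.L2Operator in
theorem matrixOpNorm_eq_norm_transpose {m d : ℕ} (A : Matrix (Fin m) (Fin d) ℝ) :
    matrixOpNorm A = ‖Aᵀ‖ := by
  rw [← conjTranspose_eq_transpose_of_trivial, l2_opNorm_conjTranspose]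
  rfl

open scoped Matrix.Norms.L2Operator in
theorem dotProduct_vecMul_self_le {m d : ℕ} (A : Matrix (Fin m) (Fin d) ℝ) (r : Fin m → ℝ) :
    r ᵥ* A ⬝ᵥ r ᵥ* A ≤ matrixOpNorm A ^ 2 * (r ⬝ᵥ r) := by
  rw [dotProduct_self_eq_norm_toLp_sq, dotProduct_self_eq_norm_toLp_sq,
    matrixOpNorm_eq_norm_transpose, ← mul_pow, ← mulVec_transpose]
  gcongr
  exact l2_opNorm_mulVec Aᵀ (WithLp.toLp 2 r)

theorem matrixOpNorm_of_isEmpty {m d : ℕ} [IsEmpty (Fin d)] (A : Matrix (Fin m) (Fin d) ℝ) :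
    matrixOpNorm A = 0 :=
  ContinuousLinearMap.opNorm_subsingleton _

section Moments

variable {Ω ι : Type*} [MeasurableSpace Ω] {μ : Measure Ω} {x : Ω → ι → ℝ} {g : Ω → ℝ} {k : ℝ}

theorem zero_le_of_integral_mul_self_mul_eq [Nonempty ι] [DecidableEq ι] (hg : ∀ ω, 0 ≤ g ω)
    (hmom : ∀ i j, ∫ ω, x ω i * x ω j * g ω ∂μ = if i = j then k else 0) : 0 ≤ k := by
  obtain ⟨i⟩ := ‹Nonempty ι›
  have h := integral_nonneg (μ := μ) (f := fun ω => x ω i * x ω i * g ω) fun ω =>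
    mul_nonneg (mul_self_nonneg (x ω i)) (hg ω)
  rwa [hmom, if_pos rfl] at h

variable [Fintype ι]

theorem dotProduct_mul_dotProduct_mul_eq_sum (u z y : ι → ℝ) (t : ℝ) :
    (u ⬝ᵥ y) * (z ⬝ᵥ y) * t = ∑ i, ∑ j, u i * z j * (y i * y j * t) := by
  rw [dotProduct, dotProduct, Finset.sum_mul_sum, Finset.sum_mul]
  refine Finset.sum_congr rfl fun i _ => ?_
  rw [Finset.sum_mul]
  exact Finset.sum_congr rfl fun j _ => by ring

theorem integrable_dotProduct_mul_dotProduct_mul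
    (hint : ∀ i j, Integrable (fun ω => x ω i * x ω j * g ω) μ) (u z : ι → ℝ) :
    Integrable (fun ω => (u ⬝ᵥ x ω) * (z ⬝ᵥ x ω) * g ω) μ := by
  simp only [dotProduct_mul_dotProduct_mul_eq_sum]
  exact integrable_finsetSum _ fun i _ => integrable_finsetSum _ fun j _ =>
    (hint i j).const_mul _

theorem dotProduct_self_sub_smul (e y : ι → ℝ) (s : ℝ) :
    (e - s • y) ⬝ᵥ (e - s • y) = e ⬝ᵥ e - 2 * s * (e ⬝ᵥ y) + s ^ 2 * (y ⬝ᵥ y) := by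
  simp only [sub_dotProduct, dotProduct_sub, smul_dotProduct, dotProduct_smul, smul_eq_mul,
    dotProduct_comm y e]
  ring

variable [DecidableEq ι]

theorem integral_dotProduct_mul_dotProduct_mul
    (hint : ∀ i j, Integrable (fun ω => x ω i * x ω j * g ω) μ)
    (hmom : ∀ i j, ∫ ω, x ω i * x ω j * g ω ∂μ = if i = j then k else 0) (u z : ι → ℝ) :
    ∫ ω, (u ⬝ᵥ x ω) * (z ⬝ᵥ x ω) * g ω ∂μ = k * (u ⬝ᵥ z) := by
  have hrow : ∀ i, ∫ ω, ∑ j, u i * z j * (x ω i * x ω j * g ω) ∂μ = k * (u i * z i) := by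
    intro i
    rw [integral_finsetSum _ fun j _ => (hint i j).const_mul _]
    simp only [integral_const_mul, hmom, mul_ite, mul_zero, Finset.sum_ite_eq, Finset.mem_univ,
      if_true]
    ring
  simp only [dotProduct_mul_dotProduct_mul_eq_sum]
  rw [integral_finsetSum _ fun i _ => integrable_finsetSum _ fun j _ => (hint i j).const_mul _]
  simp only [hrow, dotProduct, Finset.mul_sum]

theorem integral_dotProduct_self_sub_smul [IsProbabilityMeasure μ] {c : ℝ}
    (hint2 : ∀ i j, Integrable (fun ω => x ω i * x ω j) μ)
    (hint4 : ∀ i j, Integrable (fun ω => x ω i * x ω j * (x ω ⬝ᵥ x ω)) μ)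
    (hiso : ∀ i j, ∫ ω, x ω i * x ω j ∂μ = if i = j then (1 : ℝ) else 0)
    (h4 : ∀ i j, ∫ ω, x ω i * x ω j * (x ω ⬝ᵥ x ω) ∂μ = if i = j then c else 0)
    (e w : ι → ℝ) (τ : ℝ) :
    ∫ ω, (e - (τ * (w ⬝ᵥ x ω)) • x ω) ⬝ᵥ (e - (τ * (w ⬝ᵥ x ω)) • x ω) ∂μ
      = e ⬝ᵥ e - 2 * τ * (w ⬝ᵥ e) + τ ^ 2 * c * (w ⬝ᵥ w) := by
  have hint2_one : ∀ i j, Integrable (fun ω => x ω i * x ω j * 1) μ := by simpa using hint2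
  have hiso_one : ∀ i j, ∫ ω, x ω i * x ω j * 1 ∂μ = if i = j then (1 : ℝ) else 0 := by
    simpa using hiso
  have hexpand : ∀ ω, (e - (τ * (w ⬝ᵥ x ω)) • x ω) ⬝ᵥ (e - (τ * (w ⬝ᵥ x ω)) • x ω)
      = e ⬝ᵥ e - 2 * τ * ((w ⬝ᵥ x ω) * (e ⬝ᵥ x ω) * 1)
        + τ ^ 2 * ((w ⬝ᵥ x ω) * (w ⬝ᵥ x ω) * (x ω ⬝ᵥ x ω)) := fun ω => by
    rw [dotProduct_self_sub_smul]
    ring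
  have hint_cross := (integrable_dotProduct_mul_dotProduct_mul hint2_one w e).const_mul (2 * τ)
  have hint_quartic := (integrable_dotProduct_mul_dotProduct_mul hint4 w w).const_mul (τ ^ 2)
  simp only [hexpand]
  rw [integral_add ((integrable_const _).sub' hint_cross) hint_quartic,
    integral_sub (integrable_const _) hint_cross, integral_const, integral_const_mul,
    integral_const_mul, integral_dotProduct_mul_dotProduct_mul hint2_one hiso_one,
    integral_dotProduct_mul_dotProduct_mul hint4 h4]
  simp only [probReal_univ, one_smul]
  ring

end Moments

/-- one step of stochastic gradient descent with adjoint sampling for a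
consistent system `A v̂ = b`: with `v⁺ = v − τ⟨Av − b, Ax⟩x` one has
`E(‖v⁺ − v̂‖²) ≤ ‖v − v̂‖² − τ(2 − τ c‖A‖²)‖Av − b‖²`. -/
theorem sgdas_one_step_iterate_decrease
    {d m : ℕ} {Ω : Type*} [MeasurableSpace Ω] (μ : Measure Ω) [IsProbabilityMeasure μ]
    (x : Ω → Fin d → ℝ) (c τ : ℝ)
    (hint2 : ∀ i j, Integrable (fun ω => x ω i * x ω j) μ)
    (hint4 : ∀ i j, Integrable (fun ω => x ω i * x ω j * (x ω ⬝ᵥ x ω)) μ)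
    (hiso : ∀ i j, ∫ ω, x ω i * x ω j ∂μ = if i = j then (1 : ℝ) else 0)
    (h4 : ∀ i j, ∫ ω, x ω i * x ω j * (x ω ⬝ᵥ x ω) ∂μ = if i = j then c else 0)
    (A : Matrix (Fin m) (Fin d) ℝ) (b : Fin m → ℝ) (vhat v : Fin d → ℝ)
    (hcons : A.mulVec vhat = b) :
    ∫ ω, (v - τ • (((A.mulVec v - b) ⬝ᵥ A.mulVec (x ω)) • x ω) - vhat) ⬝ᵥ
          (v - τ • (((A.mulVec v - b) ⬝ᵥ A.mulVec (x ω)) • x ω) - vhat) ∂μ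
      ≤ (v - vhat) ⬝ᵥ (v - vhat)
        - τ * (2 - τ * c * matrixOpNorm A ^ 2) * ((A.mulVec v - b) ⬝ᵥ (A.mulVec v - b)) := by
  set r := A *ᵥ v - b
  have hr : r = A *ᵥ (v - vhat) := by rw [mulVec_sub, hcons]
  have hstep : ∀ ω, v - τ • ((r ⬝ᵥ A *ᵥ x ω) • x ω) - vhat
      = (v - vhat) - (τ * (r ᵥ* A ⬝ᵥ x ω)) • x ω := fun ω => by
    rw [dotProduct_mulVec, smul_smul, sub_right_comm]
  have hdescent : r ᵥ* A ⬝ᵥ (v - vhat) = r ⬝ᵥ r := by rw [← dotProduct_mulVec, ← hr]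
  have hfourth : c * (r ᵥ* A ⬝ᵥ r ᵥ* A) ≤ c * (matrixOpNorm A ^ 2 * (r ⬝ᵥ r)) := by
    -- For `d = 0` the constant `c` is unconstrained, but then `Aᵀr = 0` and `‖A‖ = 0`.
    rcases isEmpty_or_nonempty (Fin d) with hd | hd
    · simp [matrixOpNorm_of_isEmpty, dotProduct]
    · exact mul_le_mul_of_nonneg_left (dotProduct_vecMul_self_le A r)
        (zero_le_of_integral_mul_self_mul_eq (fun ω => dotProduct_self_star_nonneg (x ω)) h4)
  simp only [hstep, integral_dotProduct_self_sub_smul hint2 hint4 hiso h4, hdescent]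
  linarith [mul_le_mul_of_nonneg_left hfourth (sq_nonneg τ)]
end

section
/- Let A ∈ ℝ^{m×d}, b ∈ ℝ^m (arbitrary, possibly inconsistent), x isotropic with E(xxᵀ)=I_d and E(xxᵀ‖x‖²)=c I_d, and v⁺ = v − τ⟨Av−b, Ax⟩x. Then E(‖Av⁺ − b‖²) ≤ ‖Av − b‖² − τ(2 − τ c‖A‖²)‖Aᵀ(Av − b)‖². -/
/-!
Write `r = Av − b` and `s = ⟨Aᵀr, x⟩ = ⟨r, Ax⟩`. The new residual is `Av⁺ − b = r − τ s Ax`, so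
`‖Av⁺ − b‖² = ‖r‖² − 2τ s² + τ² s² ‖Ax‖²`. Isotropy gives `E s² = ‖Aᵀr‖²`, and bounding
`‖Ax‖² ≤ ‖A‖² ‖x‖²` inside the last term, the fourth-moment condition gives
`E (s² ‖Ax‖²) ≤ c ‖A‖² ‖Aᵀr‖²`.
-/

open MeasureTheory Matrix

lemma norm_toLp_sq_eq_dotProduct_self {n : Type*} [Fintype n] (y : n → ℝ) :
    ‖WithLp.toLp 2 y‖ ^ 2 = y ⬝ᵥ y := by
  rw [← real_inner_self_eq_norm_sq, EuclideanSpace.inner_toLp_toLp, star_trivial]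

lemma mulVec_dotProduct_self_le_matrixOpNorm_sq {m d : ℕ} (A : Matrix (Fin m) (Fin d) ℝ)
    (y : Fin d → ℝ) :
    A *ᵥ y ⬝ᵥ A *ᵥ y ≤ matrixOpNorm A ^ 2 * (y ⬝ᵥ y) := by
  rw [← norm_toLp_sq_eq_dotProduct_self, ← norm_toLp_sq_eq_dotProduct_self, ← mul_pow]
  exact pow_le_pow_left₀ (norm_nonneg _)
    ((LinearMap.toContinuousLinearMap (toEuclideanLin A)).le_opNorm (WithLp.toLp 2 y)) 2

lemma mulVec_dotProduct_self_eq_sum_sq {m n R : Type*} [Fintype m] [Fintype n] [CommSemiring R]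
    (A : Matrix m n R) (y : n → R) : A *ᵥ y ⬝ᵥ A *ᵥ y = ∑ k, (A k ⬝ᵥ y) ^ 2 := by
  simp only [dotProduct, sq]
  rfl

lemma sq_dotProduct_mul_eq_sum {ι R : Type*} [Fintype ι] [CommSemiring R] (g y : ι → R) (t : R) :
    (g ⬝ᵥ y) ^ 2 * t = ∑ i, ∑ j, g i * g j * (y i * y j * t) := by
  rw [dotProduct, sq, Finset.sum_mul_sum, Finset.sum_mul]
  exact Finset.sum_congr rfl fun i _ => by
    rw [Finset.sum_mul]
    exact Finset.sum_congr rfl fun j _ => by ring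

section Moments

variable {Ω ι : Type*} [MeasurableSpace Ω] {μ : Measure Ω} [Fintype ι]
  {x : Ω → ι → ℝ} {f : Ω → ℝ}

lemma integrable_sq_dotProduct_mul (hint : ∀ i j, Integrable (fun ω => x ω i * x ω j * f ω) μ)
    (g : ι → ℝ) : Integrable (fun ω => (g ⬝ᵥ x ω) ^ 2 * f ω) μ := by
  simp_rw [sq_dotProduct_mul_eq_sum]
  exact integrable_finsetSum _ fun i _ => integrable_finsetSum _ fun j _ =>
    (hint i j).const_mul _

lemma integral_sq_dotProduct_mul (hint : ∀ i j, Integrable (fun ω => x ω i * x ω j * f ω) μ)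
    (g : ι → ℝ) :
    ∫ ω, (g ⬝ᵥ x ω) ^ 2 * f ω ∂μ = ∑ i, ∑ j, g i * g j * ∫ ω, x ω i * x ω j * f ω ∂μ := by
  simp_rw [sq_dotProduct_mul_eq_sum]
  rw [integral_finsetSum _ fun i _ => integrable_finsetSum _ fun j _ => (hint i j).const_mul _]
  refine Finset.sum_congr rfl fun i _ => ?_
  rw [integral_finsetSum _ fun j _ => (hint i j).const_mul _]
  exact Finset.sum_congr rfl fun j _ => integral_const_mul _ _

lemma integral_sq_dotProduct_mul_of_isotropic [DecidableEq ι]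
    (hint : ∀ i j, Integrable (fun ω => x ω i * x ω j * f ω) μ) {κ : ℝ}
    (hmom : ∀ i j, ∫ ω, x ω i * x ω j * f ω ∂μ = if i = j then κ else 0) (g : ι → ℝ) :
    ∫ ω, (g ⬝ᵥ x ω) ^ 2 * f ω ∂μ = κ * (g ⬝ᵥ g) := by
  rw [integral_sq_dotProduct_mul hint]
  simp only [hmom, mul_ite, mul_zero, Finset.sum_ite_eq, Finset.mem_univ, if_true, dotProduct,
    Finset.mul_sum]
  exact Finset.sum_congr rfl fun i _ => by ring

end Moments

lemma mulVec_sgd_step_sub_dotProduct_self {m n R : Type*} [Fintype m] [Fintype n] [CommRing R]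
    (A : Matrix m n R) (b : m → R) (v y : n → R) (τ : R) :
    (A *ᵥ (v - τ • ((A *ᵥ v - b) ⬝ᵥ A *ᵥ y) • y) - b) ⬝ᵥ
        (A *ᵥ (v - τ • ((A *ᵥ v - b) ⬝ᵥ A *ᵥ y) • y) - b)
      = (A *ᵥ v - b) ⬝ᵥ (A *ᵥ v - b) - 2 * τ * (Aᵀ *ᵥ (A *ᵥ v - b) ⬝ᵥ y) ^ 2
        + τ ^ 2 * ((Aᵀ *ᵥ (A *ᵥ v - b) ⬝ᵥ y) ^ 2 * (A *ᵥ y ⬝ᵥ A *ᵥ y)) := by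
  set r := A *ᵥ v - b
  have hs : r ⬝ᵥ A *ᵥ y = Aᵀ *ᵥ r ⬝ᵥ y := by rw [dotProduct_mulVec, mulVec_transpose]
  have hstep : A *ᵥ (v - τ • (r ⬝ᵥ A *ᵥ y) • y) - b = r - (τ * (Aᵀ *ᵥ r ⬝ᵥ y)) • A *ᵥ y := by
    rw [mulVec_sub, mulVec_smul, mulVec_smul, hs, smul_smul, sub_right_comm]
  rw [hstep]
  simp only [sub_dotProduct, dotProduct_sub, smul_dotProduct, dotProduct_smul,
    dotProduct_comm (A *ᵥ y) r, hs, smul_eq_mul]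
  ring

lemma sq_dotProduct_mul_mulVec_dotProduct_self_le {m d : ℕ}
    (A : Matrix (Fin m) (Fin d) ℝ) (g y : Fin d → ℝ) :
    (g ⬝ᵥ y) ^ 2 * (A *ᵥ y ⬝ᵥ A *ᵥ y) ≤ matrixOpNorm A ^ 2 * ((g ⬝ᵥ y) ^ 2 * (y ⬝ᵥ y)) := by
  rw [mul_left_comm]
  exact mul_le_mul_of_nonneg_left (mulVec_dotProduct_self_le_matrixOpNorm_sq A y) (sq_nonneg _)

section FourthMoment

variable {Ω : Type*} [MeasurableSpace Ω] {μ : Measure Ω} {d m : ℕ} {x : Ω → Fin d → ℝ}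

lemma integrable_sq_dotProduct_mul_mulVec_dotProduct_self
    (hint2 : ∀ i j, Integrable (fun ω => x ω i * x ω j) μ)
    (hint4 : ∀ i j, Integrable (fun ω => x ω i * x ω j * (x ω ⬝ᵥ x ω)) μ)
    (A : Matrix (Fin m) (Fin d) ℝ) (g : Fin d → ℝ) :
    Integrable (fun ω => (g ⬝ᵥ x ω) ^ 2 * (A *ᵥ x ω ⬝ᵥ A *ᵥ x ω)) μ := by
  have hsq (a : Fin d → ℝ) : Integrable (fun ω => (a ⬝ᵥ x ω) ^ 2) μ := by
    simpa using integrable_sq_dotProduct_mul (f := fun _ => 1) (by simpa using hint2) a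
  -- `x` itself need not be measurable: `‖Ax‖² = ∑ₖ ⟨Aₖ, x⟩²` is measurable as a sum of
  -- integrable quadratic forms.
  have hAx : AEStronglyMeasurable (fun ω => A *ᵥ x ω ⬝ᵥ A *ᵥ x ω) μ := by
    simp_rw [mulVec_dotProduct_self_eq_sum_sq]
    exact (integrable_finsetSum _ fun k _ => hsq (A k)).aestronglyMeasurable
  refine integrable_of_le_of_le ((hsq g).1.mul hAx) (ae_of_all _ fun ω => ?_)
    (ae_of_all _ fun ω => sq_dotProduct_mul_mulVec_dotProduct_self_le A g (x ω))
    (integrable_zero Ω ℝ μ) ((integrable_sq_dotProduct_mul hint4 g).const_mul _)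
  exact mul_nonneg (sq_nonneg _) (Finset.sum_nonneg fun _ _ => mul_self_nonneg _)

lemma integral_sq_dotProduct_mul_mulVec_dotProduct_self_le {c : ℝ}
    (hint2 : ∀ i j, Integrable (fun ω => x ω i * x ω j) μ)
    (hint4 : ∀ i j, Integrable (fun ω => x ω i * x ω j * (x ω ⬝ᵥ x ω)) μ)
    (h4 : ∀ i j, ∫ ω, x ω i * x ω j * (x ω ⬝ᵥ x ω) ∂μ = if i = j then c else 0)
    (A : Matrix (Fin m) (Fin d) ℝ) (g : Fin d → ℝ) :
    ∫ ω, (g ⬝ᵥ x ω) ^ 2 * (A *ᵥ x ω ⬝ᵥ A *ᵥ x ω) ∂μ ≤ matrixOpNorm A ^ 2 * (c * (g ⬝ᵥ g)) := by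
  rw [← integral_sq_dotProduct_mul_of_isotropic hint4 h4, ← integral_const_mul]
  exact integral_mono (integrable_sq_dotProduct_mul_mulVec_dotProduct_self hint2 hint4 A g)
    ((integrable_sq_dotProduct_mul hint4 g).const_mul _)
    fun ω => sq_dotProduct_mul_mulVec_dotProduct_self_le A g (x ω)

end FourthMoment

/-- one step of SGDAS for an arbitrary (possibly inconsistent) right hand
side `b`: with `v⁺ = v − τ⟨Av − b, Ax⟩x` one has
`E(‖Av⁺ − b‖²) ≤ ‖Av − b‖² − τ(2 − τ c‖A‖²)‖Aᵀ(Av − b)‖²`. -/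
theorem sgdas_one_step_residual_decrease
    {d m : ℕ} {Ω : Type*} [MeasurableSpace Ω] (μ : Measure Ω) [IsProbabilityMeasure μ]
    (x : Ω → Fin d → ℝ) (c τ : ℝ)
    (hint2 : ∀ i j, Integrable (fun ω => x ω i * x ω j) μ)
    (hint4 : ∀ i j, Integrable (fun ω => x ω i * x ω j * (x ω ⬝ᵥ x ω)) μ)
    (hiso : ∀ i j, ∫ ω, x ω i * x ω j ∂μ = if i = j then (1 : ℝ) else 0)
    (h4 : ∀ i j, ∫ ω, x ω i * x ω j * (x ω ⬝ᵥ x ω) ∂μ = if i = j then c else 0)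
    (A : Matrix (Fin m) (Fin d) ℝ) (b : Fin m → ℝ) (v : Fin d → ℝ) :
    ∫ ω, (A.mulVec (v - τ • (((A.mulVec v - b) ⬝ᵥ A.mulVec (x ω)) • x ω)) - b) ⬝ᵥ
          (A.mulVec (v - τ • (((A.mulVec v - b) ⬝ᵥ A.mulVec (x ω)) • x ω)) - b) ∂μ
      ≤ (A.mulVec v - b) ⬝ᵥ (A.mulVec v - b)
        - τ * (2 - τ * c * matrixOpNorm A ^ 2) *
            ((Aᵀ.mulVec (A.mulVec v - b)) ⬝ᵥ (Aᵀ.mulVec (A.mulVec v - b))) := by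
  simp_rw [mulVec_sgd_step_sub_dotProduct_self]
  set g := Aᵀ *ᵥ (A *ᵥ v - b)
  have hint2_mul_one : ∀ i j, Integrable (fun ω => x ω i * x ω j * 1) μ := by simpa using hint2
  have hsq : Integrable (fun ω => (g ⬝ᵥ x ω) ^ 2) μ := by
    simpa using integrable_sq_dotProduct_mul hint2_mul_one g
  have hmean : ∫ ω, (g ⬝ᵥ x ω) ^ 2 ∂μ = g ⬝ᵥ g := by
    simpa using
      integral_sq_dotProduct_mul_of_isotropic hint2_mul_one (κ := 1) (by simpa using hiso) g
  have hquartic := integral_sq_dotProduct_mul_mulVec_dotProduct_self_le hint2 hint4 h4 A g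
  rw [integral_add (by exact (integrable_const _).sub (hsq.const_mul _))
      ((integrable_sq_dotProduct_mul_mulVec_dotProduct_self hint2 hint4 A g).const_mul _),
    integral_sub (integrable_const _) (hsq.const_mul _), integral_const, integral_const_mul,
    integral_const_mul, hmean, probReal_univ, one_smul]
  nlinarith [mul_le_mul_of_nonneg_left hquartic (sq_nonneg τ)]
end

section
/- Under the same setup with constant stepsize 0 < τ < 2/(c‖A‖²), the residuals satisfy E(‖Av^{k+1} − b‖²) ≤ β‖Av^k − b‖² where β = 1 − τ σ_min(A)²(2 − τc‖A‖²), σ_min(A) being the smallest positive singular value; if σ_min(A) > 0 and Av=b is treated with b possibly outside rg A replaced by the consistent case, iterating gives E(‖Av^k − b‖²) ≤ β^k ‖Av^0 − b‖². -/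
open MeasureTheory ProbabilityTheory Matrix

/-- The smallest positive singular value of `A`: the infimum of the set of `s > 0` such
that `s²` is an eigenvalue of `AᵀA`. -/
noncomputable def sigmaMinPos {m d : ℕ} (A : Matrix (Fin m) (Fin d) ℝ) : ℝ :=
  sInf {s : ℝ | 0 < s ∧ ∃ w : Fin d → ℝ, w ≠ 0 ∧ (Aᵀ * A).mulVec w = (s ^ 2) • w}

lemma dotProduct_self_nonneg {ι : Type*} [Fintype ι] (r : ι → ℝ) : 0 ≤ r ⬝ᵥ r :=
  Finset.sum_nonneg fun i _ => mul_self_nonneg (r i)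

lemma dotProduct_self_eq_norm_sq {n : ℕ} (y : Fin n → ℝ) :
    y ⬝ᵥ y = ‖WithLp.toLp 2 y‖ ^ 2 := by
  rw [← real_inner_self_eq_norm_sq, EuclideanSpace.inner_eq_star_dotProduct]
  simp

lemma mulVec_dotProduct_mulVec_self_le {m d : ℕ} (A : Matrix (Fin m) (Fin d) ℝ) (y : Fin d → ℝ) :
    (A *ᵥ y) ⬝ᵥ (A *ᵥ y) ≤ matrixOpNorm A ^ 2 * (y ⬝ᵥ y) := by
  rw [dotProduct_self_eq_norm_sq, dotProduct_self_eq_norm_sq, ← mul_pow]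
  gcongr
  exact (LinearMap.toContinuousLinearMap (toEuclideanLin A)).le_opNorm (WithLp.toLp 2 y)

lemma sigmaMinPos_nonneg {m d : ℕ} (A : Matrix (Fin m) (Fin d) ℝ) : 0 ≤ sigmaMinPos A :=
  Real.sInf_nonneg fun _ hs => hs.1.le

lemma sigmaMinPos_sq_le_of_mem_spectrum {m d : ℕ} (A : Matrix (Fin m) (Fin d) ℝ) {t : ℝ}
    (ht : t ∈ spectrum ℝ (Aᵀ * A)) (ht0 : 0 < t) : sigmaMinPos A ^ 2 ≤ t := by
  rw [← spectrum_toLin', ← Module.End.hasEigenvalue_iff_mem_spectrum] at ht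
  obtain ⟨w, hw⟩ := ht.exists_hasEigenvector
  have hmem : √t ∈ {s : ℝ | 0 < s ∧ ∃ w : Fin d → ℝ, w ≠ 0 ∧ (Aᵀ * A).mulVec w = (s ^ 2) • w} :=
    ⟨Real.sqrt_pos.mpr ht0, w, hw.2, by rw [Real.sq_sqrt ht0.le, ← toLin'_apply, hw.apply_eq_smul]⟩
  calc sigmaMinPos A ^ 2 ≤ √t ^ 2 :=
        pow_le_pow_left₀ (sigmaMinPos_nonneg A) (csInf_le ⟨0, fun _ hs => hs.1.le⟩ hmem) 2
    _ = t := Real.sq_sqrt ht0.le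

open scoped MatrixOrder in
lemma posSemidef_gram_sq_sub_sigmaMinPos_sq_smul {m d : ℕ} (A : Matrix (Fin m) (Fin d) ℝ) :
    ((Aᵀ * A) * (Aᵀ * A) - sigmaMinPos A ^ 2 • (Aᵀ * A)).PosSemidef := by
  have hsa : IsSelfAdjoint (Aᵀ * A) := by
    simpa using (isHermitian_conjTranspose_mul_self A).isSelfAdjoint
  have hf : ∀ t ∈ spectrum ℝ (Aᵀ * A), 0 ≤ t ^ 2 - sigmaMinPos A ^ 2 * t := by
    intro t ht
    rcases le_or_gt t 0 with ht0 | ht0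
    · nlinarith [sq_nonneg (sigmaMinPos A)]
    · nlinarith [sigmaMinPos_sq_le_of_mem_spectrum A ht ht0]
  rw [← nonneg_iff_posSemidef]
  have := cfc_nonneg hf
  rwa [cfc_sub _ _ (Aᵀ * A), cfc_pow _ _ (Aᵀ * A), cfc_const_mul _ _ (Aᵀ * A),
    cfc_id' ℝ (Aᵀ * A), sq] at this

lemma mulVec_dotProduct_mulVec_self {m d : ℕ} (B : Matrix (Fin m) (Fin d) ℝ) (w : Fin d → ℝ) :
    (B *ᵥ w) ⬝ᵥ (B *ᵥ w) = w ⬝ᵥ (Bᵀ * B) *ᵥ w := by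
  rw [← mulVec_mulVec, dotProduct_mulVec w, vecMul_transpose]

lemma sigmaMinPos_sq_mul_le {m d : ℕ} (A : Matrix (Fin m) (Fin d) ℝ) (w : Fin d → ℝ) :
    sigmaMinPos A ^ 2 * ((A *ᵥ w) ⬝ᵥ (A *ᵥ w))
      ≤ (Aᵀ *ᵥ (A *ᵥ w)) ⬝ᵥ (Aᵀ *ᵥ (A *ᵥ w)) := by
  have := (posSemidef_gram_sq_sub_sigmaMinPos_sq_smul A).dotProduct_mulVec_nonneg w
  rw [star_trivial, sub_mulVec, smul_mulVec, dotProduct_sub, dotProduct_smul, smul_eq_mul,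
    sub_nonneg] at this
  rwa [mulVec_mulVec, mulVec_dotProduct_mulVec_self, mulVec_dotProduct_mulVec_self,
    transpose_mul, transpose_transpose]

def sgdasStep {m d : ℕ} (A : Matrix (Fin m) (Fin d) ℝ) (b : Fin m → ℝ) (τ : ℝ)
    (v y : Fin d → ℝ) : Fin d → ℝ :=
  v - τ • (((A *ᵥ v - b) ⬝ᵥ A *ᵥ y) • y)

lemma dotProduct_mulVec_eq_transpose {m d : ℕ} (A : Matrix (Fin m) (Fin d) ℝ) (r : Fin m → ℝ)
    (y : Fin d → ℝ) : r ⬝ᵥ A *ᵥ y = (Aᵀ *ᵥ r) ⬝ᵥ y := by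
  rw [dotProduct_mulVec, ← mulVec_transpose]

lemma sub_smul_dotProduct_self {ι : Type*} [Fintype ι] (r z : ι → ℝ) (t : ℝ) :
    (r - t • z) ⬝ᵥ (r - t • z) = r ⬝ᵥ r - 2 * t * (r ⬝ᵥ z) + t ^ 2 * (z ⬝ᵥ z) := by
  simp only [sub_dotProduct, dotProduct_sub, smul_dotProduct, dotProduct_smul, smul_eq_mul,
    dotProduct_comm z r]
  ring

lemma residual_sgdasStep {m d : ℕ} (A : Matrix (Fin m) (Fin d) ℝ) (b : Fin m → ℝ) (τ : ℝ)
    (v y : Fin d → ℝ) :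
    A *ᵥ sgdasStep A b τ v y - b
      = (A *ᵥ v - b) - (τ * ((Aᵀ *ᵥ (A *ᵥ v - b)) ⬝ᵥ y)) • (A *ᵥ y) := by
  rw [sgdasStep, mulVec_sub, mulVec_smul, mulVec_smul, smul_smul, sub_right_comm,
    dotProduct_mulVec_eq_transpose]

lemma residual_sgdasStep_sq_le {m d : ℕ} (A : Matrix (Fin m) (Fin d) ℝ) (b : Fin m → ℝ) (τ : ℝ)
    (v y : Fin d → ℝ) :
    (A *ᵥ sgdasStep A b τ v y - b) ⬝ᵥ (A *ᵥ sgdasStep A b τ v y - b)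
      ≤ (A *ᵥ v - b) ⬝ᵥ (A *ᵥ v - b) - 2 * τ * ((Aᵀ *ᵥ (A *ᵥ v - b)) ⬝ᵥ y) ^ 2
        + τ ^ 2 * matrixOpNorm A ^ 2 * (((Aᵀ *ᵥ (A *ᵥ v - b)) ⬝ᵥ y) ^ 2 * (y ⬝ᵥ y)) := by
  rw [residual_sgdasStep, sub_smul_dotProduct_self, dotProduct_mulVec_eq_transpose]
  nlinarith [mul_le_mul_of_nonneg_left (mulVec_dotProduct_mulVec_self_le A y)
    (mul_nonneg (sq_nonneg τ) (sq_nonneg ((Aᵀ *ᵥ (A *ᵥ v - b)) ⬝ᵥ y)))]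

lemma measurable_sgdasStep {m d : ℕ} (A : Matrix (Fin m) (Fin d) ℝ) (b : Fin m → ℝ) (τ : ℝ) :
    Measurable (Function.uncurry (sgdasStep A b τ)) := by
  unfold sgdasStep Function.uncurry
  fun_prop

section Moments

variable {Ω : Type*} [MeasurableSpace Ω] {μ : Measure Ω} {d : ℕ}

lemma memLp_two_apply_of_integrable_dotProduct_self {r : Ω → Fin d → ℝ} (hr : Measurable r)
    (h : Integrable (fun ω => r ω ⬝ᵥ r ω) μ) (l : Fin d) : MemLp (fun ω => r ω l) 2 μ := by
  have hrl : Measurable fun ω => r ω l := (measurable_pi_apply l).comp hr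
  rw [memLp_two_iff_integrable_sq hrl.aestronglyMeasurable]
  refine h.mono (hrl.pow_const 2).aestronglyMeasurable (ae_of_all _ fun ω => ?_)
  rw [Real.norm_of_nonneg (sq_nonneg _), Real.norm_of_nonneg (dotProduct_self_nonneg (r ω)), sq]
  exact Finset.single_le_sum (f := fun j => r ω j * r ω j) (fun j _ => mul_self_nonneg _)
    (Finset.mem_univ l)

lemma memLp_two_mulVec_apply {m : ℕ} (B : Matrix (Fin d) (Fin m) ℝ) {r : Ω → Fin m → ℝ}
    (hr : ∀ l, MemLp (fun ω => r ω l) 2 μ) (i : Fin d) :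
    MemLp (fun ω => (B *ᵥ r ω) i) 2 μ := by
  simp only [mulVec, dotProduct]
  exact memLp_finsetSum _ fun l _ => (hr l).const_mul (B i l)

lemma sq_dotProduct_mul_eq_sum_s10 (u y : Fin d → ℝ) (a : ℝ) :
    (u ⬝ᵥ y) ^ 2 * a = ∑ i, ∑ j, (u i * u j) * (y i * y j * a) := by
  rw [sq, dotProduct, Finset.sum_mul_sum, Finset.sum_mul]
  refine Finset.sum_congr rfl fun i _ => ?_
  rw [Finset.sum_mul]
  exact Finset.sum_congr rfl fun j _ => by ring

lemma integral_sq_dotProduct_mul_of_indepFun {u X : Ω → Fin d → ℝ} {g : (Fin d → ℝ) → ℝ}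
    {κ : ℝ} (hg : Measurable g) (hind : IndepFun u X μ)
    (hu2 : ∀ i, MemLp (fun ω => u ω i) 2 μ)
    (hXg : ∀ i j, Integrable (fun ω => X ω i * X ω j * g (X ω)) μ)
    (hmom : ∀ i j, ∫ ω, X ω i * X ω j * g (X ω) ∂μ = if i = j then κ else 0) :
    Integrable (fun ω => (u ω ⬝ᵥ X ω) ^ 2 * g (X ω)) μ ∧
      ∫ ω, (u ω ⬝ᵥ X ω) ^ 2 * g (X ω) ∂μ = κ * ∫ ω, u ω ⬝ᵥ u ω ∂μ := by
  have huu : ∀ i j, Integrable (fun ω => u ω i * u ω j) μ :=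
    fun i j => (hu2 i).integrable_mul (hu2 j)
  have hind' : ∀ i j, IndepFun (fun ω => u ω i * u ω j) (fun ω => X ω i * X ω j * g (X ω)) μ :=
    fun i j => hind.comp (φ := fun v : Fin d → ℝ => v i * v j)
      (ψ := fun y : Fin d → ℝ => y i * y j * g y) (by fun_prop) (by fun_prop)
  have hterm : ∀ i j, Integrable (fun ω => (u ω i * u ω j) * (X ω i * X ω j * g (X ω))) μ :=
    fun i j => (hind' i j).integrable_mul (huu i j) (hXg i j)
  simp_rw [sq_dotProduct_mul_eq_sum_s10]
  refine ⟨integrable_finsetSum _ fun i _ => integrable_finsetSum _ fun j _ => hterm i j, ?_⟩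
  rw [integral_finsetSum _ fun i _ => integrable_finsetSum _ fun j _ => hterm i j]
  simp_rw [dotProduct]
  rw [integral_finsetSum _ fun i _ => huu i i, Finset.mul_sum]
  refine Finset.sum_congr rfl fun i _ => ?_
  rw [integral_finsetSum _ fun j _ => hterm i j]
  simp_rw [fun j => (hind' i j).integral_fun_mul_eq_mul_integral (huu i j).aestronglyMeasurable
    (hXg i j).aestronglyMeasurable, hmom, mul_ite, mul_zero, Finset.sum_ite_eq, Finset.mem_univ,
    if_true, mul_comm]

end Moments

section Recursion

variable {Ω β γ : Type*} {mΩ : MeasurableSpace Ω} {mβ : MeasurableSpace β} [MeasurableSpace γ]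
  {X : ℕ → Ω → β} {V : ℕ → Ω → γ} {F : γ → β → γ} {v₀ : γ}

lemma measurable_iSup_comap_lt_of_recursion (hF : Measurable (Function.uncurry F))
    (hV0 : ∀ ω, V 0 ω = v₀) (hV : ∀ k ω, V (k + 1) ω = F (V k ω) (X k ω)) (k : ℕ) :
    Measurable[⨆ j ∈ Set.Iio k, mβ.comap (X j)] (V k) := by
  induction k with
  | zero =>
    rw [show V 0 = fun _ => v₀ from funext hV0]
    exact measurable_const
  | succ k ih =>
    have hmono : (⨆ j ∈ Set.Iio k, mβ.comap (X j))
        ≤ ⨆ j ∈ Set.Iio (k + 1), mβ.comap (X j) :=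
      biSup_mono fun j hj => lt_trans hj (Nat.lt_succ_self k)
    have hXk : Measurable[⨆ j ∈ Set.Iio (k + 1), mβ.comap (X j)] (X k) :=
      Measurable.of_comap_le (le_biSup (fun j => mβ.comap (X j))
        (Set.mem_Iio.mpr (Nat.lt_succ_self k)))
    rw [show V (k + 1) = fun ω => F (V k ω) (X k ω) from funext (hV k)]
    exact hF.comp ((ih.mono hmono le_rfl).prodMk hXk)

lemma indepFun_of_recursion {μ : Measure Ω} (hX : ∀ k, Measurable (X k)) (hind : iIndepFun X μ)
    (hF : Measurable (Function.uncurry F))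
    (hV0 : ∀ ω, V 0 ω = v₀) (hV : ∀ k ω, V (k + 1) ω = F (V k ω) (X k ω)) (k : ℕ) :
    IndepFun (V k) (X k) μ := by
  have h := indep_iSup_of_disjoint (fun j => (hX j).comap_le) hind.iIndep
    (Set.disjoint_singleton_right.mpr (lt_irrefl k) : Disjoint (Set.Iio k) {k})
  rw [iSup_singleton] at h
  exact indep_of_indep_of_le_left h
    (measurable_iSup_comap_lt_of_recursion hF hV0 hV k).comap_le

lemma measurable_of_recursion (hX : ∀ k, Measurable (X k)) (hF : Measurable (Function.uncurry F))
    (hV0 : ∀ ω, V 0 ω = v₀) (hV : ∀ k ω, V (k + 1) ω = F (V k ω) (X k ω)) (k : ℕ) :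
    Measurable (V k) :=
  (measurable_iSup_comap_lt_of_recursion hF hV0 hV k).mono
    (iSup₂_le fun j _ => (hX j).comap_le) le_rfl

end Recursion

lemma integral_residual_sgdasStep_le {Ω : Type*} [MeasurableSpace Ω] {μ : Measure Ω} {m d : ℕ}
    (A : Matrix (Fin m) (Fin d) ℝ) (b : Fin m → ℝ) (hb : ∃ w, A *ᵥ w = b) {c τ : ℝ}
    (hτ : 0 ≤ τ * (2 - τ * c * matrixOpNorm A ^ 2)) {V X : Ω → Fin d → ℝ} (hV : Measurable V)
    (hind : IndepFun V X μ)
    (hint2 : ∀ i j, Integrable (fun ω => X ω i * X ω j) μ)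
    (hint4 : ∀ i j, Integrable (fun ω => X ω i * X ω j * (X ω ⬝ᵥ X ω)) μ)
    (hiso : ∀ i j, ∫ ω, X ω i * X ω j ∂μ = if i = j then (1 : ℝ) else 0)
    (h4 : ∀ i j, ∫ ω, X ω i * X ω j * (X ω ⬝ᵥ X ω) ∂μ = if i = j then c else 0)
    (hR : Integrable (fun ω => (A *ᵥ V ω - b) ⬝ᵥ (A *ᵥ V ω - b)) μ)
    (hR' : Integrable (fun ω =>
      (A *ᵥ sgdasStep A b τ (V ω) (X ω) - b) ⬝ᵥ (A *ᵥ sgdasStep A b τ (V ω) (X ω) - b)) μ) :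
    ∫ ω, (A *ᵥ sgdasStep A b τ (V ω) (X ω) - b) ⬝ᵥ (A *ᵥ sgdasStep A b τ (V ω) (X ω) - b) ∂μ
      ≤ (1 - τ * sigmaMinPos A ^ 2 * (2 - τ * c * matrixOpNorm A ^ 2))
        * ∫ ω, (A *ᵥ V ω - b) ⬝ᵥ (A *ᵥ V ω - b) ∂μ := by
  obtain ⟨w, rfl⟩ := hb
  have hres : Measurable fun v : Fin d → ℝ => Aᵀ *ᵥ (A *ᵥ v - A *ᵥ w) := by fun_prop
  set U : Ω → Fin d → ℝ := fun ω => Aᵀ *ᵥ (A *ᵥ V ω - A *ᵥ w)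
  have hU2 : ∀ i, MemLp (fun ω => U ω i) 2 μ := memLp_two_mulVec_apply Aᵀ
    (memLp_two_apply_of_integrable_dotProduct_self (by fun_prop) hR)
  have hUU : Integrable (fun ω => U ω ⬝ᵥ U ω) μ :=
    integrable_finsetSum _ fun i _ => (hU2 i).integrable_mul (hU2 i)
  have hindU : IndepFun U X μ := hind.comp hres measurable_id
  obtain ⟨hI1, hE1⟩ := integral_sq_dotProduct_mul_of_indepFun (g := fun _ => 1) measurable_const
    hindU hU2 (by simpa using hint2) (by simpa using hiso)
  obtain ⟨hI2, hE2⟩ := integral_sq_dotProduct_mul_of_indepFun (g := fun y => y ⬝ᵥ y)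
    (by fun_prop) hindU hU2 hint4 h4
  simp only [mul_one, one_mul] at hI1 hE1
  have hlow : sigmaMinPos A ^ 2 * ∫ ω, (A *ᵥ V ω - A *ᵥ w) ⬝ᵥ (A *ᵥ V ω - A *ᵥ w) ∂μ
      ≤ ∫ ω, U ω ⬝ᵥ U ω ∂μ := by
    rw [← integral_const_mul]
    refine integral_mono (hR.const_mul _) hUU fun ω => ?_
    simpa only [U, ← mulVec_sub] using sigmaMinPos_sq_mul_le A (V ω - w)
  calc _ ≤ ∫ ω, ((A *ᵥ V ω - A *ᵥ w) ⬝ᵥ (A *ᵥ V ω - A *ᵥ w) - 2 * τ * (U ω ⬝ᵥ X ω) ^ 2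
          + τ ^ 2 * matrixOpNorm A ^ 2 * ((U ω ⬝ᵥ X ω) ^ 2 * (X ω ⬝ᵥ X ω))) ∂μ :=
        integral_mono hR' ((hR.sub (hI1.const_mul _)).add (hI2.const_mul _))
          fun ω => residual_sgdasStep_sq_le A (A *ᵥ w) τ (V ω) (X ω)
    _ = (∫ ω, (A *ᵥ V ω - A *ᵥ w) ⬝ᵥ (A *ᵥ V ω - A *ᵥ w) ∂μ)
          - τ * (2 - τ * c * matrixOpNorm A ^ 2) * ∫ ω, U ω ⬝ᵥ U ω ∂μ := by
        have hsub : Integrable (fun ω => (A *ᵥ V ω - A *ᵥ w) ⬝ᵥ (A *ᵥ V ω - A *ᵥ w)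
            - 2 * τ * (U ω ⬝ᵥ X ω) ^ 2) μ := hR.sub (hI1.const_mul _)
        rw [integral_add hsub (hI2.const_mul _), integral_sub hR (hI1.const_mul _),
          integral_const_mul, integral_const_mul, hE1, hE2]
        ring
    _ ≤ _ := by nlinarith [mul_le_mul_of_nonneg_left hlow hτ]

lemma le_pow_mul_of_le_mul {e : ℕ → ℝ} {β : ℝ} (h : ∀ n, e (n + 1) ≤ β * e n)
    (he : ∀ n, 0 ≤ e n) (n : ℕ) : e n ≤ β ^ n * e 0 := by
  rcases le_or_gt 0 β with hβ | hβ
  · induction n with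
    | zero => simp
    | succ n ih =>
      calc e (n + 1) ≤ β * e n := h n
        _ ≤ β * (β ^ n * e 0) := mul_le_mul_of_nonneg_left ih hβ
        _ = β ^ (n + 1) * e 0 := by ring
  -- for `β < 0` the hypotheses force `e = 0`
  · have he0 : e 0 = 0 := le_antisymm (by nlinarith [h 0, he 1]) (he 0)
    rw [he0, mul_zero]
    cases n with
    | zero => exact he0.le
    | succ n => nlinarith [h n, he n]

theorem sgdas_linear_residual_convergence_general
    {d m : ℕ} {Ω : Type*} [MeasurableSpace Ω] (μ : Measure Ω) [IsProbabilityMeasure μ]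
    (A : Matrix (Fin m) (Fin d) ℝ) (b : Fin m → ℝ) (c : ℝ)
    (hcons : ∃ vhat : Fin d → ℝ, A.mulVec vhat = b)
    (x : ℕ → Ω → Fin d → ℝ)
    (hxmeas : ∀ k, Measurable (x k))
    (hindep : iIndepFun x μ)
    (hint2 : ∀ k i j, Integrable (fun ω => x k ω i * x k ω j) μ)
    (hint4 : ∀ k i j, Integrable (fun ω => x k ω i * x k ω j * (x k ω ⬝ᵥ x k ω)) μ)
    (hiso : ∀ k i j, ∫ ω, x k ω i * x k ω j ∂μ = if i = j then (1 : ℝ) else 0)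
    (h4 : ∀ k i j, ∫ ω, x k ω i * x k ω j * (x k ω ⬝ᵥ x k ω) ∂μ = if i = j then c else 0)
    (τ : ℝ) (hτ0 : 0 < τ) (hτ2 : τ < 2 / (c * matrixOpNorm A ^ 2))
    (v0 : Fin d → ℝ)
    (v : ℕ → Ω → Fin d → ℝ)
    (hv0 : ∀ ω, v 0 ω = v0)
    (hstep : ∀ k ω, v (k + 1) ω
        = v k ω - τ • (((A.mulVec (v k ω) - b) ⬝ᵥ A.mulVec (x k ω)) • x k ω))
    (hintR : ∀ k, Integrable
        (fun ω => (A.mulVec (v k ω) - b) ⬝ᵥ (A.mulVec (v k ω) - b)) μ)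
    (β : ℝ) (hβ : β = 1 - τ * sigmaMinPos A ^ 2 * (2 - τ * c * matrixOpNorm A ^ 2)) :
    (∀ k, ∫ ω, (A.mulVec (v (k + 1) ω) - b) ⬝ᵥ (A.mulVec (v (k + 1) ω) - b) ∂μ
        ≤ β * ∫ ω, (A.mulVec (v k ω) - b) ⬝ᵥ (A.mulVec (v k ω) - b) ∂μ) ∧
    (∀ k, ∫ ω, (A.mulVec (v k ω) - b) ⬝ᵥ (A.mulVec (v k ω) - b) ∂μ
        ≤ β ^ k * ((A.mulVec v0 - b) ⬝ᵥ (A.mulVec v0 - b))) := by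
  have hcA : 0 < c * matrixOpNorm A ^ 2 := by
    by_contra h
    exact (hτ0.trans hτ2).not_ge (div_nonpos_of_nonneg_of_nonpos zero_le_two (not_lt.mp h))
  have hτ : 0 ≤ τ * (2 - τ * c * matrixOpNorm A ^ 2) := by
    nlinarith [(lt_div_iff₀ hcA).mp hτ2]
  have hrec : ∀ k ω, v (k + 1) ω = sgdasStep A b τ (v k ω) (x k ω) := hstep
  have hF := measurable_sgdasStep A b τ
  have hdecay : ∀ k, ∫ ω, (A *ᵥ v (k + 1) ω - b) ⬝ᵥ (A *ᵥ v (k + 1) ω - b) ∂μ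
      ≤ β * ∫ ω, (A *ᵥ v k ω - b) ⬝ᵥ (A *ᵥ v k ω - b) ∂μ := fun k => by
    have hR' := hintR (k + 1)
    simp only [hrec] at hR' ⊢
    exact hβ ▸ integral_residual_sgdasStep_le A b hcons hτ
      (measurable_of_recursion hxmeas hF hv0 hrec k)
      (indepFun_of_recursion hxmeas hindep hF hv0 hrec k)
      (hint2 k) (hint4 k) (hiso k) (h4 k) (hintR k) hR'
  refine ⟨hdecay, fun k => ?_⟩
  have hstart : ∫ ω, (A *ᵥ v 0 ω - b) ⬝ᵥ (A *ᵥ v 0 ω - b) ∂μ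
      = (A *ᵥ v0 - b) ⬝ᵥ (A *ᵥ v0 - b) := by
    simp [hv0]
  rw [← hstart]
  exact le_pow_mul_of_le_mul (e := fun n => ∫ ω, (A *ᵥ v n ω - b) ⬝ᵥ (A *ᵥ v n ω - b) ∂μ)
    hdecay (fun n => integral_nonneg fun ω => dotProduct_self_nonneg _) k

/-- SGDAS on a consistent system with constant stepsize
`0 < τ < 2/(c‖A‖²)` satisfies `E(‖Av^{k+1} − b‖²) ≤ β E(‖Av^k − b‖²)` with
`β = 1 − τ σ_min(A)²(2 − τ c‖A‖²)`; iterating, `E(‖Av^k − b‖²) ≤ β^k ‖Av^0 − b‖²`. -/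
theorem sgdas_linear_residual_convergence
    {d m : ℕ} {Ω : Type*} [MeasurableSpace Ω] (μ : Measure Ω) [IsProbabilityMeasure μ]
    (A : Matrix (Fin m) (Fin d) ℝ) (b : Fin m → ℝ) (c : ℝ)
    (hcons : ∃ vhat : Fin d → ℝ, A.mulVec vhat = b)
    (hσ : 0 < sigmaMinPos A)
    (x : ℕ → Ω → Fin d → ℝ)
    (hxmeas : ∀ k, Measurable (x k))
    (hindep : iIndepFun x μ)
    (hint2 : ∀ k i j, Integrable (fun ω => x k ω i * x k ω j) μ)
    (hint4 : ∀ k i j, Integrable (fun ω => x k ω i * x k ω j * (x k ω ⬝ᵥ x k ω)) μ)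
    (hiso : ∀ k i j, ∫ ω, x k ω i * x k ω j ∂μ = if i = j then (1 : ℝ) else 0)
    (h4 : ∀ k i j, ∫ ω, x k ω i * x k ω j * (x k ω ⬝ᵥ x k ω) ∂μ = if i = j then c else 0)
    (τ : ℝ) (hτ0 : 0 < τ) (hτ2 : τ < 2 / (c * matrixOpNorm A ^ 2))
    (v0 : Fin d → ℝ)
    (v : ℕ → Ω → Fin d → ℝ)
    (hv0 : ∀ ω, v 0 ω = v0)
    (hstep : ∀ k ω, v (k + 1) ω
        = v k ω - τ • (((A.mulVec (v k ω) - b) ⬝ᵥ A.mulVec (x k ω)) • x k ω))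
    (hintR : ∀ k, Integrable
        (fun ω => (A.mulVec (v k ω) - b) ⬝ᵥ (A.mulVec (v k ω) - b)) μ)
    (β : ℝ) (hβ : β = 1 - τ * sigmaMinPos A ^ 2 * (2 - τ * c * matrixOpNorm A ^ 2)) :
    (∀ k, ∫ ω, (A.mulVec (v (k + 1) ω) - b) ⬝ᵥ (A.mulVec (v (k + 1) ω) - b) ∂μ
        ≤ β * ∫ ω, (A.mulVec (v k ω) - b) ⬝ᵥ (A.mulVec (v k ω) - b) ∂μ) ∧
    (∀ k, ∫ ω, (A.mulVec (v k ω) - b) ⬝ᵥ (A.mulVec (v k ω) - b) ∂μ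
        ≤ β ^ k * ((A.mulVec v0 - b) ⬝ᵥ (A.mulVec v0 - b))) :=
  sgdas_linear_residual_convergence_general μ A b c hcons x hxmeas hindep hint2 hint4 hiso h4 τ hτ0
    hτ2 v0 v hv0 hstep hintR β hβ
end

section
/- If λ_min(M) > 0 where M = E(xxᵀ/‖Ax‖²), then the random descent iterates with v^0 = 0 satisfy min_{0 ≤ k ≤ N−1} E(‖Aᵀ(Av^k − b)‖²) ≤ ‖b‖²/(λ_min(M)·N). -/
open MeasureTheory ProbabilityTheory Matrix

/-- One step of random descent with exact linesearch. -/
noncomputable def rdStep {d m : ℕ} (A : Matrix (Fin m) (Fin d) ℝ) (b : Fin m → ℝ)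
    (v x : Fin d → ℝ) : Fin d → ℝ :=
  v - (((A.mulVec v - b) ⬝ᵥ A.mulVec x) / (A.mulVec x ⬝ᵥ A.mulVec x)) • x

/-!
Write `r_k = A v_k - b` and `y_k = Aᵀ r_k`. The exact linesearch makes `r_{k+1}` the orthogonal
projection of `r_k` away from `A x_k`, so `‖r_{k+1}‖² = ‖r_k‖² - ⟨y_k, x_k⟩² / ‖A x_k‖²`; in
particular `‖r_k‖² ≤ ‖b‖²`. Since `v_k` depends only on `x_0, …, x_{k-1}`, it is independent of
`x_k`, and taking expectations gives `E‖r_k‖² - E‖r_{k+1}‖² = E⟨y_k, M y_k⟩ ≥ λ_min E‖y_k‖²`.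
Summing over `k < N` telescopes to `λ_min ∑_{k<N} E‖y_k‖² ≤ ‖b‖²`, and the smallest term is at
most the average.
-/

section LinearAlgebra

variable {n : Type*} [Fintype n]

theorem dotProduct_self_nonneg_s13 (w : n → ℝ) : 0 ≤ w ⬝ᵥ w :=
  Finset.sum_nonneg fun i _ => mul_self_nonneg (w i)

theorem dotProduct_self_sub_smul_proj (r u : n → ℝ) :
    (r - ((r ⬝ᵥ u) / (u ⬝ᵥ u)) • u) ⬝ᵥ (r - ((r ⬝ᵥ u) / (u ⬝ᵥ u)) • u)
      = r ⬝ᵥ r - (r ⬝ᵥ u) ^ 2 / (u ⬝ᵥ u) := by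
  obtain rfl | hu := eq_or_ne u 0
  · simp
  have huu : u ⬝ᵥ u ≠ 0 := fun h => hu (dotProduct_self_eq_zero.1 h)
  simp only [dotProduct_sub, sub_dotProduct, smul_dotProduct, dotProduct_smul, smul_eq_mul,
    dotProduct_comm u r]
  field_simp
  ring

theorem sq_dotProduct_div_eq_sum (y x : n → ℝ) (c : ℝ) :
    (y ⬝ᵥ x) ^ 2 / c = ∑ i, ∑ j, y i * y j * (x i * x j / c) := by
  simp only [dotProduct, sq, Finset.sum_mul_sum, Finset.sum_div]
  exact Finset.sum_congr rfl fun i _ => Finset.sum_congr rfl fun j _ => by ring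

theorem dotProduct_mulVec_eq_sum (w : n → ℝ) (M : Matrix n n ℝ) :
    w ⬝ᵥ (M *ᵥ w) = ∑ i, ∑ j, w i * w j * M i j := by
  simp only [dotProduct, mulVec, Finset.mul_sum]
  exact Finset.sum_congr rfl fun i _ => Finset.sum_congr rfl fun j _ => by ring

theorem sq_apply_le_dotProduct_self (w : n → ℝ) (i : n) : w i ^ 2 ≤ w ⬝ᵥ w := by
  simpa [dotProduct, sq] using
    Finset.single_le_sum (fun j _ => mul_self_nonneg (w j)) (Finset.mem_univ i)

theorem abs_apply_mul_apply_le_dotProduct_self (w : n → ℝ) (i j : n) :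
    |w i * w j| ≤ w ⬝ᵥ w := by
  have hi := sq_apply_le_dotProduct_self w i
  have hj := sq_apply_le_dotProduct_self w j
  rw [abs_mul]
  nlinarith [sq_nonneg (|w i| - |w j|), sq_abs (w i), sq_abs (w j)]

theorem mulVec_dotProduct_self_le {m : Type*} [Fintype m] (B : Matrix m n ℝ) (w : n → ℝ) :
    (B *ᵥ w) ⬝ᵥ (B *ᵥ w) ≤ (∑ i, B i ⬝ᵥ B i) * (w ⬝ᵥ w) := by
  rw [Finset.sum_mul]
  refine Finset.sum_le_sum fun i _ => ?_
  simpa [mulVec, dotProduct, sq] using Finset.sum_mul_sq_le_sq_mul_sq Finset.univ (B i) w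

theorem OrthonormalBasis.dotProduct_eq_sum {ι : Type*} [Fintype ι]
    (e : OrthonormalBasis ι ℝ (EuclideanSpace ℝ n)) (v w : n → ℝ) :
    v ⬝ᵥ w = ∑ i, (v ⬝ᵥ e i) * (w ⬝ᵥ e i) := by
  have := e.sum_inner_mul_inner (WithLp.toLp 2 v) (WithLp.toLp 2 w)
  simp only [EuclideanSpace.inner_eq_star_dotProduct, star_trivial] at this
  simpa [dotProduct_comm] using this.symm

theorem Matrix.IsHermitian.dotProduct_mulVec_eq_sum_eigenvalues [DecidableEq n]
    {M : Matrix n n ℝ} (hM : M.IsHermitian) (w : n → ℝ) :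
    w ⬝ᵥ (M *ᵥ w) = ∑ i, hM.eigenvalues i * (w ⬝ᵥ hM.eigenvectorBasis i) ^ 2 := by
  rw [hM.eigenvectorBasis.dotProduct_eq_sum]
  refine Finset.sum_congr rfl fun i _ => ?_
  have hsymm : Mᵀ = M := hM
  rw [dotProduct_comm (M *ᵥ w), dotProduct_mulVec, ← mulVec_transpose, hsymm,
    hM.mulVec_eigenvectorBasis, smul_dotProduct, smul_eq_mul, dotProduct_comm w]
  ring

theorem Matrix.IsHermitian.sInf_eigenvalues_mul_dotProduct_self_le {M : Matrix n n ℝ}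
    (hM : M.IsHermitian) (w : n → ℝ) :
    sInf {t : ℝ | ∃ v : n → ℝ, v ≠ 0 ∧ M *ᵥ v = t • v} * (w ⬝ᵥ w) ≤ w ⬝ᵥ (M *ᵥ w) := by
  classical
  set S := {t : ℝ | ∃ v : n → ℝ, v ≠ 0 ∧ M *ᵥ v = t • v}
  have hS : S ⊆ Set.range hM.eigenvalues := by
    rintro t ⟨v, hv, hMv⟩
    rw [← hM.spectrum_real_eq_range_eigenvalues, ← Matrix.spectrum_toLin']
    exact Module.End.HasEigenvalue.mem_spectrum
      (Module.End.hasEigenvalue_of_hasEigenvector ⟨Module.End.mem_eigenspace_iff.2 hMv, hv⟩)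
  have hle : ∀ i, sInf S ≤ hM.eigenvalues i := fun i =>
    csInf_le ((Set.finite_range _).subset hS).bddBelow
      ⟨_, (WithLp.ofLp_eq_zero 2).ne.2 (hM.eigenvectorBasis.orthonormal.ne_zero i),
        hM.mulVec_eigenvectorBasis i⟩
  rw [hM.dotProduct_mulVec_eq_sum_eigenvalues, hM.eigenvectorBasis.dotProduct_eq_sum,
    Finset.mul_sum]
  exact Finset.sum_le_sum fun i _ => by
    rw [← sq]
    exact mul_le_mul_of_nonneg_right (hle i) (sq_nonneg _)

end LinearAlgebra

theorem exists_lt_le_div_of_mul_le_sub_succ {f R : ℕ → ℝ} {c : ℝ} {N : ℕ} (hc : 0 < c)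
    (hN : 0 < N) (hRN : 0 ≤ R N) (h : ∀ k, c * f k ≤ R k - R (k + 1)) :
    ∃ k < N, f k ≤ R 0 / (c * N) := by
  have hsum : c * ∑ k ∈ Finset.range N, f k ≤ R 0 := by
    rw [Finset.mul_sum]
    linarith [Finset.sum_le_sum fun k (_ : k ∈ Finset.range N) => h k,
      Finset.sum_range_sub' R N]
  obtain ⟨k, hk, hfk⟩ := Finset.exists_le_of_sum_le (Finset.nonempty_range_iff.2 hN.ne')
    (f := f) (g := fun _ => R 0 / (c * N)) (by
      rw [Finset.sum_const, Finset.card_range, nsmul_eq_mul]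
      field_simp
      linarith)
  exact ⟨k, Finset.mem_range.1 hk, hfk⟩

section Independence

variable {Ω β : Type*} [MeasurableSpace β]

abbrev pastMeasurableSpace (x : ℕ → Ω → β) (k : ℕ) : MeasurableSpace Ω :=
  ⨆ i ∈ Set.Iio k, MeasurableSpace.comap (x i) inferInstance

theorem pastMeasurableSpace_mono (x : ℕ → Ω → β) : Monotone (pastMeasurableSpace x) :=
  fun _ _ hkl => biSup_mono fun _ hi => lt_of_lt_of_le hi hkl

theorem measurable_pastMeasurableSpace_succ (x : ℕ → Ω → β) (k : ℕ) :
    Measurable[pastMeasurableSpace x (k + 1)] (x k) :=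
  (comap_measurable (x k)).mono (le_iSup₂ (f := fun i (_ : i ∈ Set.Iio (k + 1)) =>
    MeasurableSpace.comap (x i) inferInstance) k (Nat.lt_succ_self k)) le_rfl

variable [MeasurableSpace Ω] {μ : Measure Ω}

theorem pastMeasurableSpace_le {x : ℕ → Ω → β} (hx : ∀ k, Measurable (x k)) (k : ℕ) :
    pastMeasurableSpace x k ≤ ‹MeasurableSpace Ω› :=
  iSup₂_le fun i _ => (hx i).comap_le

theorem indep_pastMeasurableSpace {x : ℕ → Ω → β} (hx : ∀ k, Measurable (x k))
    (hind : iIndepFun x μ) (k : ℕ) :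
    Indep (pastMeasurableSpace x k) (MeasurableSpace.comap (x k) inferInstance) μ := by
  simpa [pastMeasurableSpace] using indep_iSup_of_disjoint (fun i => (hx i).comap_le)
    ((iIndepFun_iff_iIndep _ _ _).1 hind) (S := Set.Iio k) (T := {k}) (by simp)

theorem indepFun_of_measurable_pastMeasurableSpace {γ : Type*} [MeasurableSpace γ]
    {x : ℕ → Ω → β} (hx : ∀ k, Measurable (x k)) (hind : iIndepFun x μ) {k : ℕ} {Y : Ω → γ}
    (hY : Measurable[pastMeasurableSpace x k] Y) : IndepFun Y (x k) μ :=
  (IndepFun_iff_Indep _ _ _).2 <|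
    indep_of_indep_of_le_left (indep_pastMeasurableSpace hx hind k) hY.comap_le

variable [IsFiniteMeasure μ] {n : Type*} [Fintype n]

theorem integrable_apply_mul_apply_of_dotProduct_self_le {Y : Ω → n → ℝ} (hY : Measurable Y)
    {c : ℝ} (hYc : ∀ ω, Y ω ⬝ᵥ Y ω ≤ c) (i j : n) :
    Integrable (fun ω => Y ω i * Y ω j) μ :=
  Integrable.of_bound (by fun_prop) c
    (ae_of_all _ fun ω => (abs_apply_mul_apply_le_dotProduct_self (Y ω) i j).trans (hYc ω))

theorem integrable_dotProduct_mulVec_of_dotProduct_self_le {Y : Ω → n → ℝ}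
    (hY : Measurable Y) {c : ℝ} (hYc : ∀ ω, Y ω ⬝ᵥ Y ω ≤ c) (M : Matrix n n ℝ) :
    Integrable (fun ω => Y ω ⬝ᵥ (M *ᵥ Y ω)) μ := by
  simp_rw [dotProduct_mulVec_eq_sum]
  exact integrable_finsetSum _ fun i _ => integrable_finsetSum _ fun j _ =>
    (integrable_apply_mul_apply_of_dotProduct_self_le hY hYc i j).mul_const _

theorem mul_integral_dotProduct_self_le_of_dotProduct_self_le {Y : Ω → n → ℝ}
    (hY : Measurable Y) {c : ℝ} (hYc : ∀ ω, Y ω ⬝ᵥ Y ω ≤ c) {M : Matrix n n ℝ} {l : ℝ}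
    (hl : ∀ w, l * (w ⬝ᵥ w) ≤ w ⬝ᵥ (M *ᵥ w)) :
    l * ∫ ω, Y ω ⬝ᵥ Y ω ∂μ ≤ ∫ ω, Y ω ⬝ᵥ (M *ᵥ Y ω) ∂μ := by
  have hYY : Integrable (fun ω => Y ω ⬝ᵥ Y ω) μ := by
    simp only [dotProduct]
    exact integrable_finsetSum _ fun i _ =>
      integrable_apply_mul_apply_of_dotProduct_self_le hY hYc i i
  rw [← integral_const_mul]
  exact integral_mono (hYY.const_mul l)
    (integrable_dotProduct_mulVec_of_dotProduct_self_le hY hYc M) fun ω => hl (Y ω)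

theorem integral_sum_mul_of_indepFun {Y : Ω → n → ℝ} {X : Ω → β} (hYX : IndepFun Y X μ)
    (hY : Measurable Y) {c : ℝ} (hYc : ∀ ω, Y ω ⬝ᵥ Y ω ≤ c) {q : n → n → β → ℝ}
    (hq : ∀ i j, Measurable (q i j)) (hqX : ∀ i j, Integrable (fun ω => q i j (X ω)) μ) :
    ∫ ω, ∑ i, ∑ j, Y ω i * Y ω j * q i j (X ω) ∂μ
      = ∫ ω, ∑ i, ∑ j, Y ω i * Y ω j * ∫ ω', q i j (X ω') ∂μ ∂μ := by
  have hYY := integrable_apply_mul_apply_of_dotProduct_self_le (μ := μ) hY hYc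
  have hind : ∀ i j, IndepFun (fun ω => Y ω i * Y ω j) (fun ω => q i j (X ω)) μ := fun i j =>
    hYX.comp (φ := fun y : n → ℝ => y i * y j) (by fun_prop) (hq i j)
  have hint : ∀ i j, Integrable (fun ω => Y ω i * Y ω j * q i j (X ω)) μ := fun i j =>
    (hind i j).integrable_mul (hYY i j) (hqX i j)
  rw [integral_finsetSum _ fun i _ => integrable_finsetSum _ fun j _ => hint i j,
    integral_finsetSum _ fun i _ => integrable_finsetSum _ fun j _ => (hYY i j).mul_const _]
  refine Finset.sum_congr rfl fun i _ => ?_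
  rw [integral_finsetSum _ fun j _ => hint i j,
    integral_finsetSum _ fun j _ => (hYY i j).mul_const _]
  refine Finset.sum_congr rfl fun j _ => ?_
  rw [(hind i j).integral_fun_mul_eq_mul_integral (hYY i j).aestronglyMeasurable
    (hqX i j).aestronglyMeasurable, integral_mul_const]

end Independence

section RandomDescent

variable {d m : ℕ} (A : Matrix (Fin m) (Fin d) ℝ) (b : Fin m → ℝ)

theorem residual_sq_rdStep (v x : Fin d → ℝ) :
    (A *ᵥ rdStep A b v x - b) ⬝ᵥ (A *ᵥ rdStep A b v x - b)
      = (A *ᵥ v - b) ⬝ᵥ (A *ᵥ v - b)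
        - (Aᵀ *ᵥ (A *ᵥ v - b) ⬝ᵥ x) ^ 2 / (A *ᵥ x ⬝ᵥ A *ᵥ x) := by
  have h : A *ᵥ rdStep A b v x - b = (A *ᵥ v - b)
      - (((A *ᵥ v - b) ⬝ᵥ A *ᵥ x) / (A *ᵥ x ⬝ᵥ A *ᵥ x)) • A *ᵥ x := by
    rw [rdStep, mulVec_sub, mulVec_smul, sub_right_comm]
  rw [h, dotProduct_self_sub_smul_proj, dotProduct_mulVec, mulVec_transpose]

theorem residual_sq_rdStep_le (v x : Fin d → ℝ) :
    (A *ᵥ rdStep A b v x - b) ⬝ᵥ (A *ᵥ rdStep A b v x - b) ≤ (A *ᵥ v - b) ⬝ᵥ (A *ᵥ v - b) := by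
  rw [residual_sq_rdStep]
  exact sub_le_self _ (div_nonneg (sq_nonneg _) (dotProduct_self_nonneg_s13 _))

theorem residual_sq_le_of_rdStep_iterate {v x : ℕ → Fin d → ℝ} (hv0 : v 0 = 0)
    (hstep : ∀ k, v (k + 1) = rdStep A b (v k) (x k)) (k : ℕ) :
    (A *ᵥ v k - b) ⬝ᵥ (A *ᵥ v k - b) ≤ b ⬝ᵥ b := by
  induction k with
  | zero => simp [hv0]
  | succ k ih => exact (hstep k ▸ residual_sq_rdStep_le A b (v k) (x k)).trans ih

theorem measurable_rdStep :
    Measurable fun p : (Fin d → ℝ) × (Fin d → ℝ) => rdStep A b p.1 p.2 := by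
  unfold rdStep
  fun_prop

theorem measurable_pastMeasurableSpace_of_rdStep_iterate {Ω : Type*}
    {x v : ℕ → Ω → Fin d → ℝ} (hv0 : ∀ ω, v 0 ω = 0)
    (hstep : ∀ k ω, v (k + 1) ω = rdStep A b (v k ω) (x k ω)) (k : ℕ) :
    Measurable[pastMeasurableSpace x k] (v k) := by
  induction k with
  | zero => simp [funext hv0]
  | succ k ih =>
    rw [funext (hstep k)]
    exact (measurable_rdStep A b).comp <|
      (ih.mono (pastMeasurableSpace_mono x k.le_succ) le_rfl).prodMk
        (measurable_pastMeasurableSpace_succ x k)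

variable {Ω : Type*} [MeasurableSpace Ω] {μ : Measure Ω} [IsFiniteMeasure μ]

theorem mul_integral_le_integral_residual_sub_succ {x v : ℕ → Ω → Fin d → ℝ}
    (hx : ∀ k, Measurable (x k)) (hind : iIndepFun x μ) {M : Matrix (Fin d) (Fin d) ℝ} {k : ℕ}
    (hMint : ∀ i j, Integrable
      (fun ω => x k ω i * x k ω j / (A *ᵥ x k ω ⬝ᵥ A *ᵥ x k ω)) μ)
    (hM : ∀ i j, ∫ ω, x k ω i * x k ω j / (A *ᵥ x k ω ⬝ᵥ A *ᵥ x k ω) ∂μ = M i j)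
    {l : ℝ} (hl : ∀ w, l * (w ⬝ᵥ w) ≤ w ⬝ᵥ (M *ᵥ w))
    (hv0 : ∀ ω, v 0 ω = 0) (hstep : ∀ k ω, v (k + 1) ω = rdStep A b (v k ω) (x k ω)) :
    l * ∫ ω, Aᵀ *ᵥ (A *ᵥ v k ω - b) ⬝ᵥ Aᵀ *ᵥ (A *ᵥ v k ω - b) ∂μ
      ≤ ∫ ω, (A *ᵥ v k ω - b) ⬝ᵥ (A *ᵥ v k ω - b) ∂μ
        - ∫ ω, (A *ᵥ v (k + 1) ω - b) ⬝ᵥ (A *ᵥ v (k + 1) ω - b) ∂μ := by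
  have hpast := measurable_pastMeasurableSpace_of_rdStep_iterate A b hv0 hstep
  have hv : ∀ j, Measurable (v j) := fun j =>
    (hpast j).mono (pastMeasurableSpace_le hx j) le_rfl
  have hres : ∀ j ω, (A *ᵥ v j ω - b) ⬝ᵥ (A *ᵥ v j ω - b) ≤ b ⬝ᵥ b := fun j ω =>
    residual_sq_le_of_rdStep_iterate A b (v := (v · ω)) (x := (x · ω)) (hv0 ω) (hstep · ω) j
  have hres_int : ∀ j, Integrable (fun ω => (A *ᵥ v j ω - b) ⬝ᵥ (A *ᵥ v j ω - b)) μ := fun j =>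
    Integrable.of_bound (by fun_prop) (b ⬝ᵥ b) (ae_of_all _ fun ω => by
      rw [Real.norm_of_nonneg (dotProduct_self_nonneg_s13 _)]
      exact hres j ω)
  set y := fun ω => Aᵀ *ᵥ (A *ᵥ v k ω - b)
  have hy : Measurable y := by fun_prop
  have hyb : ∀ ω, y ω ⬝ᵥ y ω ≤ (∑ i, Aᵀ i ⬝ᵥ Aᵀ i) * (b ⬝ᵥ b) := fun ω =>
    (mulVec_dotProduct_self_le _ _).trans <| mul_le_mul_of_nonneg_left (hres k ω) <|
      Finset.sum_nonneg fun i _ => dotProduct_self_nonneg_s13 _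
  have hyx : IndepFun y (x k) μ := indepFun_of_measurable_pastMeasurableSpace hx hind <|
    (show Measurable fun w : Fin d → ℝ => Aᵀ *ᵥ (A *ᵥ w - b) by fun_prop).comp (hpast k)
  calc l * ∫ ω, y ω ⬝ᵥ y ω ∂μ
      ≤ ∫ ω, y ω ⬝ᵥ (M *ᵥ y ω) ∂μ :=
        mul_integral_dotProduct_self_le_of_dotProduct_self_le hy hyb hl
    _ = ∫ ω, ∑ i, ∑ j, y ω i * y ω j * (x k ω i * x k ω j / (A *ᵥ x k ω ⬝ᵥ A *ᵥ x k ω)) ∂μ := by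
        rw [integral_sum_mul_of_indepFun hyx hy hyb
          (q := fun i j z => z i * z j / (A *ᵥ z ⬝ᵥ A *ᵥ z)) (fun i j => by fun_prop) hMint]
        simp_rw [hM, dotProduct_mulVec_eq_sum]
    _ = ∫ ω, (A *ᵥ v k ω - b) ⬝ᵥ (A *ᵥ v k ω - b)
          - (A *ᵥ v (k + 1) ω - b) ⬝ᵥ (A *ᵥ v (k + 1) ω - b) ∂μ := by
        refine integral_congr_ae (ae_of_all _ fun ω => ?_)
        simp only [hstep k ω, residual_sq_rdStep, sq_dotProduct_div_eq_sum, y]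
        ring
    _ = _ := integral_sub (hres_int k) (hres_int (k + 1))

end RandomDescent

/-- if `λ_min(M) > 0` for `M = E(xxᵀ/‖Ax‖²)`, random descent with
`v^0 = 0` and i.i.d. directions satisfies
`min_{0 ≤ k ≤ N−1} E(‖Aᵀ(Av^k − b)‖²) ≤ ‖b‖²/(λ_min(M)·N)`. -/
theorem rd_sublinear_normal_equation_residual
    {d m : ℕ} {Ω : Type*} [MeasurableSpace Ω] (μ : Measure Ω) [IsProbabilityMeasure μ]
    (A : Matrix (Fin m) (Fin d) ℝ) (b : Fin m → ℝ)
    (x : ℕ → Ω → Fin d → ℝ)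
    (hxmeas : ∀ k, Measurable (x k))
    (hindep : iIndepFun x μ)
    (M : Matrix (Fin d) (Fin d) ℝ)
    (hMint : ∀ k i j, Integrable
        (fun ω => x k ω i * x k ω j / (A.mulVec (x k ω) ⬝ᵥ A.mulVec (x k ω))) μ)
    (hM : ∀ k i j, ∫ ω, x k ω i * x k ω j / (A.mulVec (x k ω) ⬝ᵥ A.mulVec (x k ω)) ∂μ
        = M i j)
    (lmin : ℝ)
    (hlmin : lmin = sInf {t : ℝ | ∃ w : Fin d → ℝ, w ≠ 0 ∧ M.mulVec w = t • w})
    (hpos : 0 < lmin)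
    (v : ℕ → Ω → Fin d → ℝ)
    (hv0 : ∀ ω, v 0 ω = 0)
    (hstep : ∀ k ω, v (k + 1) ω = rdStep A b (v k ω) (x k ω))
    (N : ℕ) (hN : 0 < N) :
    ∃ k < N, ∫ ω, (Aᵀ.mulVec (A.mulVec (v k ω) - b)) ⬝ᵥ
          (Aᵀ.mulVec (A.mulVec (v k ω) - b)) ∂μ
        ≤ (b ⬝ᵥ b) / (lmin * N) := by
  have hMsymm : M.IsHermitian := by
    refine Matrix.IsHermitian.ext fun i j => ?_
    simp only [star_trivial, ← hM 0, mul_comm (x 0 _ i)]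
  have hdecrease := fun k => mul_integral_le_integral_residual_sub_succ A b hxmeas hindep
    (hMint k) (hM k) (fun w => hlmin ▸ hMsymm.sInf_eigenvalues_mul_dotProduct_self_le w) hv0 hstep
  have hR0 : ∫ ω, (A *ᵥ v 0 ω - b) ⬝ᵥ (A *ᵥ v 0 ω - b) ∂μ = b ⬝ᵥ b := by simp [hv0]
  rw [← hR0]
  exact exists_lt_le_div_of_mul_le_sub_succ hpos hN
    (integral_nonneg fun ω => dotProduct_self_nonneg_s13 _) hdecrease
end
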